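/- Let A₁ be an n₁-by-n₁ complex matrix and A₂ an n₂-by-n₂ complex matrix, and let A = A₁ ⊕ A₂ be their block diagonal direct sum. Then a(A) = max{a(A₁), a(A₂)}, and for every integer ℓ ≥ 1, A^ℓ is a partial isometry if and only if both A₁^ℓ and A₂^ℓ are partial isometries; consequently p(A) = min{p(A₁), p(A₂)}. -/

import Mathlib

open Matrix

noncomputable section

/-- An `ι`-by-`ι` complex matrix `A` is a *partial isometry* if `‖Ax‖ = ‖x‖` for every
vector `x` in the orthogonal complement of `ker A` (Euclidean structure). -/
def Matrix.IsPartialIsometry {ι : Type*} [Fintype ι] [DecidableEq ι]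
    (A : Matrix ι ι ℂ) : Prop :=
  ∀ x ∈ (LinearMap.ker (Matrix.toEuclideanLin A))ᗮ, ‖Matrix.toEuclideanLin A x‖ = ‖x‖

/-- The *power partial isometry index* `p(A)`: the supremum (in `ℕ∞`, possibly `⊤`) of the
nonnegative integers `j` such that `I, A, A², …, A^j` are all partial isometries. -/
def Matrix.pIndex {ι : Type*} [Fintype ι] [DecidableEq ι] (A : Matrix ι ι ℂ) : ℕ∞ :=
  sSup ((↑) '' {j : ℕ | ∀ i ≤ j, (A ^ i).IsPartialIsometry})

/-- The *ascent* `a(A)`: the smallest nonnegative integer `k` with `ker A^k = ker A^(k+1)`. -/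
def Matrix.ascent {ι : Type*} [Fintype ι] [DecidableEq ι] (A : Matrix ι ι ℂ) : ℕ :=
  sInf {k : ℕ | LinearMap.ker (Matrix.toEuclideanLin (A ^ k)) =
    LinearMap.ker (Matrix.toEuclideanLin (A ^ (k + 1)))}

/-- `A` is unitarily similar to `B` (allowing different, necessarily equipotent, index types):
`B = U* A U` for some unitary `U`. -/
def Matrix.UnitarilySimilarTo {ι κ : Type*} [Fintype ι] [Fintype κ] [DecidableEq ι]
    [DecidableEq κ] (A : Matrix ι ι ℂ) (B : Matrix κ κ ℂ) : Prop :=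
  ∃ U : Matrix ι κ ℂ, Uᴴ * U = 1 ∧ U * Uᴴ = 1 ∧ B = Uᴴ * A * U

/-- The `q`-by-`q` nilpotent Jordan block `J_q`. -/
def JordanBlock (q : ℕ) : Matrix (Fin q) (Fin q) ℂ :=
  Matrix.of fun a b => if (b : ℕ) = (a : ℕ) + 1 then 1 else 0

/-- `A` is of class `S_n`: a contraction whose eigenvalues all have moduli strictly
less than `1` and with `rank (1 - A*A) = 1`. -/
def Matrix.IsClassSn {n : ℕ} (A : Matrix (Fin n) (Fin n) ℂ) : Prop :=
  (∀ x : EuclideanSpace ℂ (Fin n), ‖Matrix.toEuclideanLin A x‖ ≤ ‖x‖) ∧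
  (∀ z ∈ spectrum ℂ A, ‖z‖ < 1) ∧
  (1 - Aᴴ * A).rank = 1

/-!
With respect to the orthogonal decomposition `ℂ^(ι ⊕ κ) = ℂ^ι ⊕ ℂ^κ`, the block-diagonal matrix
`fromBlocks A 0 0 D` acts componentwise, and so do its powers. Hence its kernel, the orthogonal
complement of its kernel and the squared norms all split into the two components: a power of
`A ⊕ D` is a partial isometry iff the same power of each block is, and `ker (A ⊕ D)^k` stabilises
at `k` iff both `ker A^k` and `ker D^k` do. The ascent is therefore the infimum of the
intersection of two upper sets of `ℕ`, and the index the supremum of the intersection of two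
lower sets; such sets are nested, which turns the infimum into a `max` and the supremum into a
`min`.
-/

theorem csInf_inter_of_isUpperSet {α : Type*} [ConditionallyCompleteLinearOrderBot α]
    {s t : Set α} (hs : IsUpperSet s) (ht : IsUpperSet t) (hs' : s.Nonempty) (ht' : t.Nonempty) :
    sInf (s ∩ t) = max (sInf s) (sInf t) := by
  rcases hs.total ht with h | h
  · rw [Set.inter_eq_left.2 h, max_eq_left (csInf_le_csInf (OrderBot.bddBelow t) hs' h)]
  · rw [Set.inter_eq_right.2 h, max_eq_right (csInf_le_csInf (OrderBot.bddBelow s) ht' h)]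

theorem sSup_image_inter_of_isLowerSet {α β : Type*} [LinearOrder α] [CompleteLinearOrder β]
    (f : α → β) {s t : Set α} (hs : IsLowerSet s) (ht : IsLowerSet t) :
    sSup (f '' (s ∩ t)) = min (sSup (f '' s)) (sSup (f '' t)) := by
  rcases hs.total ht with h | h
  · rw [Set.inter_eq_left.2 h, min_eq_left (sSup_le_sSup (Set.image_mono h))]
  · rw [Set.inter_eq_right.2 h, min_eq_right (sSup_le_sSup (Set.image_mono h))]

theorem Module.End.isUpperSet_setOf_ker_pow_eq_ker_pow_succ {K V : Type*} [DivisionRing K]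
    [AddCommGroup V] [Module K V] (f : Module.End K V) :
    IsUpperSet {k : ℕ | LinearMap.ker (f ^ k) = LinearMap.ker (f ^ (k + 1))} := by
  intro k m hkm hk
  obtain ⟨d, rfl⟩ := Nat.exists_eq_add_of_le hkm
  show LinearMap.ker (f ^ (k + d)) = LinearMap.ker (f ^ (k + d + 1))
  rw [add_assoc, ← ker_pow_constant hk, ← ker_pow_constant hk]

namespace EuclideanSpace

variable {𝕜 ι κ : Type*}

def sumElim (u : EuclideanSpace 𝕜 ι) (v : EuclideanSpace 𝕜 κ) : EuclideanSpace 𝕜 (ι ⊕ κ) :=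
  WithLp.toLp 2 (Sum.elim u v)

theorem exists_eq_sumElim (x : EuclideanSpace 𝕜 (ι ⊕ κ)) :
    ∃ (u : EuclideanSpace 𝕜 ι) (v : EuclideanSpace 𝕜 κ), x = sumElim u v :=
  ⟨WithLp.toLp 2 (x ∘ Sum.inl), WithLp.toLp 2 (x ∘ Sum.inr), by ext (i | i) <;> rfl⟩

variable [RCLike 𝕜]

theorem sumElim_eq_zero_iff {u : EuclideanSpace 𝕜 ι} {v : EuclideanSpace 𝕜 κ} :
    sumElim u v = 0 ↔ u = 0 ∧ v = 0 := by
  constructor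
  · intro h
    exact ⟨by ext i; exact congr($h (.inl i)), by ext i; exact congr($h (.inr i))⟩
  · rintro ⟨rfl, rfl⟩
    ext (i | i) <;> rfl

variable [Fintype ι] [Fintype κ]

theorem norm_sumElim_sq (u : EuclideanSpace 𝕜 ι) (v : EuclideanSpace 𝕜 κ) :
    ‖sumElim u v‖ ^ 2 = ‖u‖ ^ 2 + ‖v‖ ^ 2 := by
  simp only [EuclideanSpace.norm_sq_eq, Fintype.sum_sum_type]
  rfl

theorem inner_sumElim (u u' : EuclideanSpace 𝕜 ι) (v v' : EuclideanSpace 𝕜 κ) :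
    inner 𝕜 (sumElim u v) (sumElim u' v') = inner 𝕜 u u' + inner 𝕜 v v' := by
  simp only [PiLp.inner_apply, Fintype.sum_sum_type]
  rfl

end EuclideanSpace

namespace Matrix

open EuclideanSpace

variable {𝕜 ι κ : Type*} [RCLike 𝕜] [Fintype ι] [Fintype κ] [DecidableEq ι] [DecidableEq κ]

theorem toEuclideanLin_pow (A : Matrix ι ι 𝕜) (k : ℕ) :
    toEuclideanLin (A ^ k) = toEuclideanLin A ^ k := by
  rw [← coe_toEuclideanCLM_eq_toEuclideanLin, map_pow, ContinuousLinearMap.toLinearMap_pow]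
  rfl

theorem toEuclideanLin_fromBlocks_sumElim (A : Matrix ι ι 𝕜) (D : Matrix κ κ 𝕜)
    (u : EuclideanSpace 𝕜 ι) (v : EuclideanSpace 𝕜 κ) :
    toEuclideanLin (fromBlocks A 0 0 D) (sumElim u v) =
      sumElim (toEuclideanLin A u) (toEuclideanLin D v) := by
  ext (i | i) <;> simp [sumElim, toLpLin_apply, fromBlocks_mulVec]

theorem sumElim_mem_ker_fromBlocks_iff {A : Matrix ι ι 𝕜} {D : Matrix κ κ 𝕜}
    {u : EuclideanSpace 𝕜 ι} {v : EuclideanSpace 𝕜 κ} :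
    sumElim u v ∈ LinearMap.ker (toEuclideanLin (fromBlocks A 0 0 D)) ↔
      u ∈ LinearMap.ker (toEuclideanLin A) ∧ v ∈ LinearMap.ker (toEuclideanLin D) := by
  simp only [LinearMap.mem_ker, toEuclideanLin_fromBlocks_sumElim, sumElim_eq_zero_iff]

theorem ker_fromBlocks_eq_iff {A A' : Matrix ι ι 𝕜} {D D' : Matrix κ κ 𝕜} :
    LinearMap.ker (toEuclideanLin (fromBlocks A 0 0 D)) =
        LinearMap.ker (toEuclideanLin (fromBlocks A' 0 0 D')) ↔
      LinearMap.ker (toEuclideanLin A) = LinearMap.ker (toEuclideanLin A') ∧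
        LinearMap.ker (toEuclideanLin D) = LinearMap.ker (toEuclideanLin D') := by
  constructor
  · intro h
    constructor <;> ext w
    · simpa only [sumElim_mem_ker_fromBlocks_iff, Submodule.zero_mem, and_true] using
        SetLike.ext_iff.1 h (sumElim w (0 : EuclideanSpace 𝕜 κ))
    · simpa only [sumElim_mem_ker_fromBlocks_iff, Submodule.zero_mem, true_and] using
        SetLike.ext_iff.1 h (sumElim (0 : EuclideanSpace 𝕜 ι) w)
  · rintro ⟨hA, hD⟩
    ext x
    obtain ⟨u, v, rfl⟩ := exists_eq_sumElim x
    rw [sumElim_mem_ker_fromBlocks_iff, sumElim_mem_ker_fromBlocks_iff, hA, hD]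

theorem sumElim_mem_orthogonal_ker_fromBlocks_iff {A : Matrix ι ι 𝕜} {D : Matrix κ κ 𝕜}
    {u : EuclideanSpace 𝕜 ι} {v : EuclideanSpace 𝕜 κ} :
    sumElim u v ∈ (LinearMap.ker (toEuclideanLin (fromBlocks A 0 0 D)))ᗮ ↔
      u ∈ (LinearMap.ker (toEuclideanLin A))ᗮ ∧ v ∈ (LinearMap.ker (toEuclideanLin D))ᗮ := by
  simp only [Submodule.mem_orthogonal]
  constructor
  · intro h
    constructor
    · intro u' hu'
      simpa [inner_sumElim] using
        h (sumElim u' 0) (sumElim_mem_ker_fromBlocks_iff.2 ⟨hu', by simp⟩)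
    · intro v' hv'
      simpa [inner_sumElim] using
        h (sumElim 0 v') (sumElim_mem_ker_fromBlocks_iff.2 ⟨by simp, hv'⟩)
  · rintro ⟨hu, hv⟩ x hx
    obtain ⟨u', v', rfl⟩ := exists_eq_sumElim x
    obtain ⟨hu', hv'⟩ := sumElim_mem_ker_fromBlocks_iff.1 hx
    rw [inner_sumElim, hu u' hu', hv v' hv', add_zero]

theorem isPartialIsometry_fromBlocks_iff {A : Matrix ι ι ℂ} {D : Matrix κ κ ℂ} :
    (fromBlocks A 0 0 D).IsPartialIsometry ↔ A.IsPartialIsometry ∧ D.IsPartialIsometry := by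
  simp only [IsPartialIsometry, ← sq_eq_sq₀ (norm_nonneg _) (norm_nonneg _)]
  constructor
  · intro h
    constructor
    · intro u hu
      have hx := sumElim_mem_orthogonal_ker_fromBlocks_iff.2
        ⟨hu, Submodule.zero_mem (LinearMap.ker (toEuclideanLin D))ᗮ⟩
      simpa [toEuclideanLin_fromBlocks_sumElim, norm_sumElim_sq] using h _ hx
    · intro v hv
      have hx := sumElim_mem_orthogonal_ker_fromBlocks_iff.2
        ⟨Submodule.zero_mem (LinearMap.ker (toEuclideanLin A))ᗮ, hv⟩
      simpa [toEuclideanLin_fromBlocks_sumElim, norm_sumElim_sq] using h _ hx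
  · rintro ⟨hA, hD⟩ x hx
    obtain ⟨u, v, rfl⟩ := exists_eq_sumElim x
    obtain ⟨hu, hv⟩ := sumElim_mem_orthogonal_ker_fromBlocks_iff.1 hx
    rw [toEuclideanLin_fromBlocks_sumElim, norm_sumElim_sq, norm_sumElim_sq, hA u hu, hD v hv]

theorem ascent_fromBlocks (A : Matrix ι ι ℂ) (D : Matrix κ κ ℂ) :
    (fromBlocks A 0 0 D).ascent = max A.ascent D.ascent := by
  obtain ⟨a, -, ha⟩ := Module.End.exists_ker_pow_eq_ker_pow_succ (toEuclideanLin A)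
  obtain ⟨d, -, hd⟩ := Module.End.exists_ker_pow_eq_ker_pow_succ (toEuclideanLin D)
  simp only [ascent, fromBlocks_diagonal_pow, ker_fromBlocks_eq_iff, Set.ofPred_and,
    toEuclideanLin_pow]
  exact csInf_inter_of_isUpperSet (Module.End.isUpperSet_setOf_ker_pow_eq_ker_pow_succ _)
    (Module.End.isUpperSet_setOf_ker_pow_eq_ker_pow_succ _) ⟨a, ha⟩ ⟨d, hd⟩

theorem pIndex_fromBlocks (A : Matrix ι ι ℂ) (D : Matrix κ κ ℂ) :
    (fromBlocks A 0 0 D).pIndex = min A.pIndex D.pIndex := by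
  have hlower (p : ℕ → Prop) : IsLowerSet {j | ∀ i ≤ j, p i} :=
    fun _ _ hkj hj i hik => hj i (hik.trans hkj)
  simp only [pIndex, fromBlocks_diagonal_pow, isPartialIsometry_fromBlocks_iff, imp_and,
    forall_and, Set.ofPred_and]
  exact sSup_image_inter_of_isLowerSet _ (hlower _) (hlower _)

end Matrix

/-- For a direct sum `A = A₁ ⊕ A₂`: `a(A) = max {a(A₁), a(A₂)}`; for every `ℓ ≥ 1`, `A^ℓ` is a
partial isometry iff both `A₁^ℓ` and `A₂^ℓ` are; and `p(A) = min {p(A₁), p(A₂)}`. -/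
theorem ascent_pIndex_fromBlocks (n₁ n₂ : ℕ)
    (A₁ : Matrix (Fin n₁) (Fin n₁) ℂ) (A₂ : Matrix (Fin n₂) (Fin n₂) ℂ) :
    (Matrix.fromBlocks A₁ 0 0 A₂).ascent = max A₁.ascent A₂.ascent ∧
    (∀ ℓ : ℕ, 1 ≤ ℓ →
      ((Matrix.fromBlocks A₁ 0 0 A₂ ^ ℓ).IsPartialIsometry ↔
        (A₁ ^ ℓ).IsPartialIsometry ∧ (A₂ ^ ℓ).IsPartialIsometry)) ∧
    (Matrix.fromBlocks A₁ 0 0 A₂).pIndex = min A₁.pIndex A₂.pIndex := by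
  refine ⟨ascent_fromBlocks A₁ A₂, fun ℓ _ => ?_, pIndex_fromBlocks A₁ A₂⟩
  rw [fromBlocks_diagonal_pow, isPartialIsometry_fromBlocks_iff]

end
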